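/- If there exists an integer cyclically (2,d)-diagonal relative Heffter array H_{2d}(n;2d) with n ≥ 2d+4, then there exists an integer cyclically (2,d+2)-diagonal relative Heffter array H_{2d+4}(n;2d+4). -/

import Mathlib

/-- Number of filled cells in row `i` of the partially filled array `A`. -/
def rowFilled {m n : ℕ} (A : Fin m → Fin n → Option ℤ) (i : Fin m) : ℕ :=
  (Finset.univ.filter fun j => (A i j).isSome).card

/-- Number of filled cells in column `j` of the partially filled array `A`. -/
def colFilled {m n : ℕ} (A : Fin m → Fin n → Option ℤ) (j : Fin n) : ℕ :=
  (Finset.univ.filter fun i => (A i j).isSome).card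

/-- Sum of the entries of row `i` (empty cells count as `0`). -/
def rowSum {m n : ℕ} (A : Fin m → Fin n → Option ℤ) (i : Fin m) : ℤ :=
  ∑ j, (A i j).getD 0

/-- Sum of the entries of column `j` (empty cells count as `0`). -/
def colSum {m n : ℕ} (A : Fin m → Fin n → Option ℤ) (j : Fin n) : ℤ :=
  ∑ i, (A i j).getD 0

/-- `A` is a square integer relative Heffter array `H_t(n;k)`, written with
integer entries: each row and each column has exactly `k` filled cells, each
row and column sums to `0` in `ℤ`, every entry `x` satisfies
`1 ≤ |x| ≤ ⌊(2nk+t)/2⌋` with `|x|` not a multiple of `(2nk+t)/t` (i.e. the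
class of `x` avoids the subgroup `J` of order `t`), and for every admissible
absolute value exactly one cell contains it (up to sign), so that every class
of `ZMod (2nk+t) \ J` is represented exactly once up to sign. -/
def IsIntHeffter (n k t : ℕ) (A : Fin n → Fin n → Option ℤ) : Prop :=
  (∀ i, rowFilled A i = k) ∧
  (∀ j, colFilled A j = k) ∧
  (∀ i, rowSum A i = 0) ∧
  (∀ j, colSum A j = 0) ∧
  (∀ i j x, A i j = some x →
    1 ≤ x.natAbs ∧ x.natAbs ≤ (2 * n * k + t) / 2 ∧
      ¬ ((2 * n * k + t) / t ∣ x.natAbs)) ∧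
  (∀ x : ℕ, 1 ≤ x → x ≤ (2 * n * k + t) / 2 → ¬ ((2 * n * k + t) / t ∣ x) →
    ∃! p : Fin n × Fin n, A p.1 p.2 = some (x : ℤ) ∨ A p.1 p.2 = some (-(x : ℤ)))

/-- A square partially filled integer array is shiftable if every row and every
column contains as many positive entries as negative entries. -/
def Shiftable {n : ℕ} (A : Fin n → Fin n → Option ℤ) : Prop :=
  (∀ i : Fin n, (Finset.univ.filter fun j => 0 < (A i j).getD 0).card =
      (Finset.univ.filter fun j => (A i j).getD 0 < 0).card) ∧
  (∀ j : Fin n, (Finset.univ.filter fun i => 0 < (A i j).getD 0).card =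
      (Finset.univ.filter fun i => (A i j).getD 0 < 0).card)

/-- `A` is cyclically `k`-diagonal: its filled cells are exactly those of `k`
consecutive cyclic diagonals (cell `(r,c)` lies on diagonal `r - c (mod n)`). -/
def CycDiagonal {n : ℕ} (k : ℕ) (A : Fin n → Fin n → Option ℤ) : Prop :=
  ∃ d : ZMod n, ∀ r c : Fin n, (A r c).isSome ↔
    ∃ j : ℕ, j < k ∧ ((r : ℕ) : ZMod n) - ((c : ℕ) : ZMod n) = d + (j : ZMod n)

/-- `A` (of size `N` with `s ∣ N`) is cyclically `(s,k)`-diagonal: it is obtained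
from a cyclically `k`-diagonal `(N/s) × (N/s)` array by blowing up each cell into
an `s × s` block and then cyclically shifting the columns by some offset. -/
def CycSKDiagonal (s k : ℕ) {N : ℕ} (A : Fin N → Fin N → Option ℤ) : Prop :=
  s ∣ N ∧ ∃ (d : ZMod (N / s)) (off : ℕ), ∀ r c : Fin N, (A r c).isSome ↔
    ∃ j : ℕ, j < k ∧
      (((r : ℕ) / s : ℕ) : ZMod (N / s)) - (((((c : ℕ) + off) % N) / s : ℕ) : ZMod (N / s))
        = d + (j : ZMod (N / s))

/-- The support of a partially filled integer array: the set of absolute values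
of its entries. -/
def suppSet {m n : ℕ} (A : Fin m → Fin n → Option ℤ) : Set ℕ :=
  {a | ∃ i j x, A i j = some x ∧ x.natAbs = a}

/-- The entries of `A` have pairwise distinct absolute values. -/
def DistinctAbs {m n : ℕ} (A : Fin m → Fin n → Option ℤ) : Prop :=
  ∀ i j i' j' x y, A i j = some x → A i' j' = some y →
    x.natAbs = y.natAbs → (i, j) = (i', j')

/-- The skeleton of a partially filled array: the set of its filled positions. -/
def skel {m n : ℕ} (A : Fin m → Fin n → Option ℤ) : Set (Fin m × Fin n) :=
  {p | (A p.1 p.2).isSome}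

/-!
Write `n = 2m` and view an `n × n` array as an `m × m` array of `2 × 2` blocks. The given
`H_{2d}(n;2d)` fills `d` consecutive block diagonals with the absolute values `1, …, d(4m+1)`
that are not multiples of `4m+1`. Fill the next two block diagonals, levels `c = d` and
`c = d + 1`, with the values `c(4m+1) + 1, …, c(4m+1) + 4m`, one per cell, signed by
`(-1)^(a+b+c)` for the position `(a,b)` inside the block. In a row the two entries of one level
differ by `2m`, in a column by `m`, so with these signs the two new levels cancel in every row
and column; what results is an `H_{2d+4}(n;2d+4)` on `d + 2` consecutive block diagonals.
-/

namespace Heffter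

/-- For `H_t(n;k)` take `B = ⌊(2nk+t)/2⌋` and `q = (2nk+t)/t`. -/
def admissible (q B : ℕ) : Set ℕ := {x | 1 ≤ x ∧ x ≤ B ∧ ¬ q ∣ x}

theorem admissible_succ_mul (p c : ℕ) :
    admissible (p + 1) ((c + 1) * (p + 1)) =
      admissible (p + 1) (c * (p + 1)) ∪ Set.Ioc (c * (p + 1)) (c * (p + 1) + p) := by
  ext x
  simp only [admissible, Set.mem_union, Set.mem_ofPred_eq, Set.mem_Ioc]
  constructor
  · rintro ⟨h1, h2, hdvd⟩
    by_contra! h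
    have hx : x = (c + 1) * (p + 1) := by
      by_cases hxc : x ≤ c * (p + 1)
      · exact absurd (h.1 h1 hxc) hdvd
      · have := h.2 (by omega); nlinarith
    exact hdvd (hx ▸ dvd_mul_left _ _)
  · rintro (⟨h1, h2, hdvd⟩ | ⟨h1, h2⟩)
    · exact ⟨h1, h2.trans (Nat.mul_le_mul_right _ c.le_succ), hdvd⟩
    · refine ⟨by omega, by nlinarith, fun hdvd => ?_⟩
      obtain ⟨k, rfl⟩ := hdvd
      have h3 : c < k := by nlinarith
      have h4 : k < c + 1 := by nlinarith
      omega

theorem disjoint_admissible_Ioc {q B a b : ℕ} (h : B ≤ a) :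
    Disjoint (admissible q B) (Set.Ioc a b) :=
  Set.disjoint_left.2 fun _ hx hx' => by
    rw [admissible, Set.mem_ofPred_eq] at hx
    rw [Set.mem_Ioc] at hx'
    omega

theorem admissible_heffter {n m k c : ℕ} (hn : n = 2 * m) (hk : k = 2 * c) :
    admissible ((2 * n * k + k) / k) ((2 * n * k + k) / 2) =
      admissible (4 * m + 1) (c * (4 * m + 1)) := by
  subst hk
  rcases Nat.eq_zero_or_pos c with rfl | hc
  · ext x
    simp only [admissible, Set.mem_ofPred_eq]
    omega
  · have hv : 2 * n * (2 * c) + 2 * c = (4 * m + 1) * (2 * c) := by subst hn; ring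
    rw [hv, Nat.mul_div_cancel _ (by omega), mul_left_comm, Nat.mul_div_cancel_left _ two_pos,
      mul_comm (4 * m + 1) c]

structure IsIntHeffterOn {n : ℕ} (k : ℕ) (S : Set ℕ) (A : Fin n → Fin n → Option ℤ) : Prop where
  rowFilled_eq : ∀ i, rowFilled A i = k
  colFilled_eq : ∀ j, colFilled A j = k
  rowSum_eq : ∀ i, rowSum A i = 0
  colSum_eq : ∀ j, colSum A j = 0
  suppSet_eq : suppSet A = S
  distinctAbs : DistinctAbs A

theorem eq_some_or_eq_some_neg_iff {o : Option ℤ} {x : ℕ} :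
    o = some (x : ℤ) ∨ o = some (-(x : ℤ)) ↔ ∃ y, o = some y ∧ y.natAbs = x := by
  cases o <;> simp [Int.natAbs_eq_iff]

theorem suppSet_eq_and_distinctAbs_iff {n : ℕ} {S : Set ℕ} {A : Fin n → Fin n → Option ℤ} :
    suppSet A = S ∧ DistinctAbs A ↔
      (∀ i j x, A i j = some x → x.natAbs ∈ S) ∧
        ∀ x ∈ S, ∃! p : Fin n × Fin n, A p.1 p.2 = some (x : ℤ) ∨ A p.1 p.2 = some (-(x : ℤ)) := by
  simp only [eq_some_or_eq_some_neg_iff]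
  constructor
  · rintro ⟨rfl, hdist⟩
    refine ⟨fun i j x h => ⟨i, j, x, h, rfl⟩, ?_⟩
    rintro _ ⟨i, j, x, hx, rfl⟩
    exact ⟨(i, j), ⟨x, hx, rfl⟩, fun p ⟨y, hy, hxy⟩ => hdist _ _ _ _ _ _ hy hx hxy⟩
  · rintro ⟨hsupp, huniq⟩
    refine ⟨Set.Subset.antisymm ?_ fun x hx => ?_, ?_⟩
    · rintro _ ⟨i, j, x, hx, rfl⟩
      exact hsupp i j x hx
    · obtain ⟨⟨i, j⟩, ⟨y, hy, rfl⟩, -⟩ := huniq x hx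
      exact ⟨i, j, y, hy, rfl⟩
    · intro i j i' j' x y hx hy hxy
      obtain ⟨p, -, hp⟩ := huniq _ (hsupp i j x hx)
      exact (hp (i, j) ⟨x, hx, rfl⟩).trans (hp (i', j') ⟨y, hy, hxy.symm⟩).symm

theorem isIntHeffter_iff {n k t : ℕ} {A : Fin n → Fin n → Option ℤ} :
    IsIntHeffter n k t A ↔
      IsIntHeffterOn k (admissible ((2 * n * k + t) / t) ((2 * n * k + t) / 2)) A := by
  have h := suppSet_eq_and_distinctAbs_iff (S := admissible ((2 * n * k + t) / t)
    ((2 * n * k + t) / 2)) (A := A)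
  simp only [admissible, Set.mem_ofPred_eq, and_imp] at h
  rw [IsIntHeffter, ← h]
  exact ⟨fun ⟨h1, h2, h3, h4, h5, h6⟩ => ⟨h1, h2, h3, h4, h5, h6⟩,
    fun ⟨h1, h2, h3, h4, h5, h6⟩ => ⟨h1, h2, h3, h4, h5, h6⟩⟩

section Overlay

variable {m n : ℕ} {A B : Fin m → Fin n → Option ℤ}

def overlay (A B : Fin m → Fin n → Option ℤ) : Fin m → Fin n → Option ℤ :=
  fun i j => (A i j).or (B i j)

theorem skel_overlay : skel (overlay A B) = skel A ∪ skel B := by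
  ext
  simp [skel, overlay, Option.isSome_or]

theorem eq_none_of_disjoint_skel (hAB : Disjoint (skel A) (skel B)) {i j} (h : (A i j).isSome) :
    B i j = none :=
  Option.not_isSome_iff_eq_none.1 (Set.disjoint_left.1 hAB (show (i, j) ∈ skel A from h))

theorem map_overlay_apply {R : Type*} [AddZeroClass R] (φ : Option ℤ → R) (hφ : φ none = 0)
    (hAB : Disjoint (skel A) (skel B)) (i j) : φ (overlay A B i j) = φ (A i j) + φ (B i j) := by
  cases hA : A i j with
  | none => simp [overlay, hA, hφ]
  | some x => simp [overlay, hA, hφ, eq_none_of_disjoint_skel hAB (i := i) (j := j) (by simp [hA])]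

theorem rowFilled_overlay (hAB : Disjoint (skel A) (skel B)) (i) :
    rowFilled (overlay A B) i = rowFilled A i + rowFilled B i := by
  simp only [rowFilled, Finset.card_filter, ← Finset.sum_add_distrib]
  exact Finset.sum_congr rfl fun j _ => map_overlay_apply (fun o => if o.isSome then 1 else 0)
    rfl hAB i j

theorem colFilled_overlay (hAB : Disjoint (skel A) (skel B)) (j) :
    colFilled (overlay A B) j = colFilled A j + colFilled B j := by
  simp only [colFilled, Finset.card_filter, ← Finset.sum_add_distrib]
  exact Finset.sum_congr rfl fun i _ => map_overlay_apply (fun o => if o.isSome then 1 else 0)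
    rfl hAB i j

theorem rowSum_overlay (hAB : Disjoint (skel A) (skel B)) (i) :
    rowSum (overlay A B) i = rowSum A i + rowSum B i := by
  simp only [rowSum, ← Finset.sum_add_distrib]
  exact Finset.sum_congr rfl fun j _ => map_overlay_apply (·.getD 0) rfl hAB i j

theorem colSum_overlay (hAB : Disjoint (skel A) (skel B)) (j) :
    colSum (overlay A B) j = colSum A j + colSum B j := by
  simp only [colSum, ← Finset.sum_add_distrib]
  exact Finset.sum_congr rfl fun i _ => map_overlay_apply (·.getD 0) rfl hAB i j

theorem overlay_eq_some {i j x} (h : overlay A B i j = some x) :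
    A i j = some x ∨ B i j = some x := by
  cases hA : A i j <;> simp_all [overlay]

theorem suppSet_overlay (hAB : Disjoint (skel A) (skel B)) :
    suppSet (overlay A B) = suppSet A ∪ suppSet B := by
  refine Set.Subset.antisymm ?_ ?_
  · rintro _ ⟨i, j, x, hx, rfl⟩
    rcases overlay_eq_some hx with h | h
    exacts [Or.inl ⟨i, j, x, h, rfl⟩, Or.inr ⟨i, j, x, h, rfl⟩]
  · rintro _ (⟨i, j, x, hx, rfl⟩ | ⟨i, j, x, hx, rfl⟩)
    · exact ⟨i, j, x, by simp [overlay, hx], rfl⟩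
    · have hA : A i j = none := by
        rw [← Option.not_isSome_iff_eq_none]
        intro h
        simpa [hx] using eq_none_of_disjoint_skel hAB h
      exact ⟨i, j, x, by simp [overlay, hA, hx], rfl⟩

theorem DistinctAbs.overlay (hA : DistinctAbs A) (hB : DistinctAbs B)
    (hAB : Disjoint (suppSet A) (suppSet B)) : DistinctAbs (overlay A B) := by
  intro i j i' j' x y hx hy hxy
  rcases overlay_eq_some hx with hx | hx <;> rcases overlay_eq_some hy with hy | hy
  · exact hA _ _ _ _ _ _ hx hy hxy
  · exact absurd ⟨i', j', y, hy, rfl⟩ (Set.disjoint_left.1 hAB ⟨i, j, x, hx, hxy⟩)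
  · exact absurd ⟨i, j, x, hx, rfl⟩ (Set.disjoint_left.1 hAB ⟨i', j', y, hy, hxy.symm⟩)
  · exact hB _ _ _ _ _ _ hx hy hxy

end Overlay

theorem IsIntHeffterOn.overlay {n k k' : ℕ} {S S' : Set ℕ} {A B : Fin n → Fin n → Option ℤ}
    (hA : IsIntHeffterOn k S A) (hB : IsIntHeffterOn k' S' B)
    (hskel : Disjoint (skel A) (skel B)) (hS : Disjoint S S') :
    IsIntHeffterOn (k + k') (S ∪ S') (overlay A B) where
  rowFilled_eq i := by rw [rowFilled_overlay hskel, hA.rowFilled_eq, hB.rowFilled_eq]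
  colFilled_eq j := by rw [colFilled_overlay hskel, hA.colFilled_eq, hB.colFilled_eq]
  rowSum_eq i := by rw [rowSum_overlay hskel, hA.rowSum_eq, hB.rowSum_eq, add_zero]
  colSum_eq j := by rw [colSum_overlay hskel, hA.colSum_eq, hB.colSum_eq, add_zero]
  suppSet_eq := by rw [suppSet_overlay hskel, hA.suppSet_eq, hB.suppSet_eq]
  distinctAbs :=
    DistinctAbs.overlay hA.distinctAbs hB.distinctAbs (by rwa [hA.suppSet_eq, hB.suppSet_eq])

theorem natCast_zmod_inj_of_lt {m a b : ℕ} (ha : a < m) (hb : b < m) (h : (a : ZMod m) = b) :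
    a = b := by
  rwa [ZMod.natCast_eq_natCast_iff', Nat.mod_eq_of_lt ha, Nat.mod_eq_of_lt hb] at h

section BlockCoordinates

variable {n m : ℕ} [NeZero m] (hn : n = 2 * m)

def blockCoord : Fin n ≃ ZMod m × Fin 2 where
  toFun r := (((r : ℕ) / 2 : ℕ), ⟨(r : ℕ) % 2, Nat.mod_lt _ two_pos⟩)
  invFun p := ⟨2 * p.1.val + p.2, by have := p.1.val_lt; omega⟩
  left_inv r := by
    have : (r : ℕ) / 2 < m := by omega
    ext
    simp only [ZMod.val_natCast_of_lt this]
    omega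
  right_inv := fun ⟨i, a⟩ => by
    have ha : (a : ℕ) < 2 := a.isLt
    ext
    · simp only [show (2 * i.val + a) / 2 = i.val by omega, ZMod.natCast_zmod_val]
    · change (2 * i.val + a) % 2 = a
      omega

variable [NeZero n]

def colCoord (off : ℕ) : Fin n ≃ ZMod m × Fin 2 :=
  (Equiv.addRight (Fin.ofNat n off)).trans (blockCoord hn)

def blockDiff (off : ℕ) (r c : Fin n) : ZMod m :=
  (blockCoord hn r).1 - (colCoord hn off c).1

theorem blockDiff_eq (off : ℕ) (r c : Fin n) :
    blockDiff hn off r c =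
      (((r : ℕ) / 2 : ℕ) : ZMod m) - (((((c : ℕ) + off) % n) / 2 : ℕ) : ZMod m) := by
  simp [blockDiff, colCoord, blockCoord, Fin.val_add]

def blockDiagonal (off : ℕ) (e : ZMod m) : Set (Fin n × Fin n) :=
  {p | blockDiff hn off p.1 p.2 = e}

def diagBand (off : ℕ) (e : ZMod m) (k : ℕ) : Set (Fin n × Fin n) :=
  {p | ∃ j < k, blockDiff hn off p.1 p.2 = e + j}

theorem diagBand_succ (off : ℕ) (e : ZMod m) (k : ℕ) :
    diagBand hn off e (k + 1) = diagBand hn off e k ∪ blockDiagonal hn off (e + k) := by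
  ext p
  simp only [diagBand, blockDiagonal, Set.mem_union, Set.mem_ofPred_eq, Nat.lt_succ_iff_lt_or_eq,
    or_and_right, exists_or, exists_eq_left]

theorem disjoint_blockDiagonal {off : ℕ} {e e' : ZMod m} (h : e ≠ e') :
    Disjoint (blockDiagonal hn off e) (blockDiagonal hn off e') :=
  Set.disjoint_left.2 fun _ he he' => h (he.symm.trans he')

theorem disjoint_diagBand_blockDiagonal {off k c : ℕ} (e : ZMod m) (hkc : k ≤ c) (hcm : c < m) :
    Disjoint (diagBand hn off e k) (blockDiagonal hn off (e + c)) := by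
  refine Set.disjoint_left.2 fun p ⟨j, hjk, hj⟩ hc => ?_
  have := natCast_zmod_inj_of_lt (by omega) hcm (add_left_cancel (hj.symm.trans hc))
  omega

end BlockCoordinates

theorem cycSKDiagonal_two_iff {n k : ℕ} [NeZero n] [NeZero (n / 2)] (hn : n = 2 * (n / 2))
    {A : Fin n → Fin n → Option ℤ} :
    CycSKDiagonal 2 k A ↔ ∃ (e : ZMod (n / 2)) (off : ℕ), skel A = diagBand hn off e k := by
  simp only [CycSKDiagonal, Set.ext_iff, Prod.forall, skel, diagBand, blockDiff_eq,
    Set.mem_ofPred_eq]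
  exact ⟨fun ⟨_, h⟩ => h, fun h => ⟨⟨n / 2, hn⟩, h⟩⟩

section BlockDiagArray

variable {n m : ℕ} [NeZero m] [NeZero n] (hn : n = 2 * m) (off : ℕ) (e : ZMod m)
  (f : ZMod m × Fin 2 × Fin 2 → ℤ)

/-- The array filling the cells of `blockDiagonal hn off e`: the `2 × 2` block in block row `i`
carries the entry `f (i, a, b)` in its row `a` and column `b`. -/
def blockDiagArray : Fin n → Fin n → Option ℤ := fun r c =>
  if blockDiff hn off r c = e then
    some (f ((blockCoord hn r).1, (blockCoord hn r).2, (colCoord hn off c).2))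
  else none

theorem skel_blockDiagArray : skel (blockDiagArray hn off e f) = blockDiagonal hn off e := by
  ext
  simp only [skel, blockDiagArray, blockDiagonal, Set.mem_ofPred_eq]
  split_ifs <;> simpa

theorem sum_row_blockDiagArray {R : Type*} [AddCommMonoid R] (φ : Option ℤ → R)
    (hφ : φ none = 0) (r : Fin n) :
    ∑ c, φ (blockDiagArray hn off e f r c) =
      ∑ b, φ (some (f ((blockCoord hn r).1, (blockCoord hn r).2, b))) := by
  obtain ⟨⟨i, a⟩, hr⟩ : ∃ p, blockCoord hn r = p := ⟨_, rfl⟩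
  have hdiag : ∀ j : ZMod m, i - j = e ↔ j = i - e := fun j => by
    constructor <;> rintro rfl <;> simp
  simp only [blockDiagArray, blockDiff, hr]
  rw [(colCoord hn off).sum_comp (fun q => φ (if i - q.1 = e then some (f (i, a, q.2)) else none)),
    Fintype.sum_prod_type]
  simp only [hdiag, apply_ite φ, hφ, Finset.sum_ite_irrel, Finset.sum_const_zero,
    Finset.sum_ite_eq', Finset.mem_univ, if_true]

theorem sum_col_blockDiagArray {R : Type*} [AddCommMonoid R] (φ : Option ℤ → R)
    (hφ : φ none = 0) (c : Fin n) :
    ∑ r, φ (blockDiagArray hn off e f r c) =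
      ∑ a, φ (some (f ((colCoord hn off c).1 + e, a, (colCoord hn off c).2))) := by
  obtain ⟨⟨j, b⟩, hc⟩ : ∃ q, colCoord hn off c = q := ⟨_, rfl⟩
  have hdiag : ∀ i : ZMod m, i - j = e ↔ i = j + e := fun _ => sub_eq_iff_eq_add'
  simp only [blockDiagArray, blockDiff, hc]
  rw [(blockCoord hn).sum_comp (fun p => φ (if p.1 - j = e then some (f (p.1, p.2, b)) else none)),
    Fintype.sum_prod_type]
  simp only [hdiag, apply_ite φ, hφ, Finset.sum_ite_irrel, Finset.sum_const_zero,
    Finset.sum_ite_eq', Finset.mem_univ, if_true]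

theorem rowFilled_blockDiagArray (r : Fin n) : rowFilled (blockDiagArray hn off e f) r = 2 := by
  rw [rowFilled, Finset.card_filter,
    sum_row_blockDiagArray hn off e f (fun o => if o.isSome then 1 else 0) rfl]
  simp

theorem colFilled_blockDiagArray (c : Fin n) : colFilled (blockDiagArray hn off e f) c = 2 := by
  rw [colFilled, Finset.card_filter,
    sum_col_blockDiagArray hn off e f (fun o => if o.isSome then 1 else 0) rfl]
  simp

theorem rowSum_blockDiagArray (r : Fin n) :
    rowSum (blockDiagArray hn off e f) r = ∑ b, f ((blockCoord hn r).1, (blockCoord hn r).2, b) :=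
  sum_row_blockDiagArray hn off e f (·.getD 0) rfl r

theorem colSum_blockDiagArray (c : Fin n) :
    colSum (blockDiagArray hn off e f) c =
      ∑ a, f ((colCoord hn off c).1 + e, a, (colCoord hn off c).2) :=
  sum_col_blockDiagArray hn off e f (·.getD 0) rfl c

theorem suppSet_blockDiagArray :
    suppSet (blockDiagArray hn off e f) = Set.range fun p => (f p).natAbs := by
  ext x
  constructor
  · rintro ⟨r, c, y, hy, rfl⟩
    simp only [blockDiagArray] at hy
    split_ifs at hy
    cases hy
    exact ⟨((blockCoord hn r).1, (blockCoord hn r).2, (colCoord hn off c).2), rfl⟩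
  · rintro ⟨⟨i, a, b⟩, rfl⟩
    exact ⟨(blockCoord hn).symm (i, a), (colCoord hn off).symm (i - e, b), _,
      by simp [blockDiagArray, blockDiff], rfl⟩

theorem distinctAbs_blockDiagArray (hf : Function.Injective fun p => (f p).natAbs) :
    DistinctAbs (blockDiagArray hn off e f) := by
  have hcol : ∀ {r c}, blockDiff hn off r c = e →
      (colCoord hn off c).1 = (blockCoord hn r).1 - e := by
    intro r c h
    rw [← h, blockDiff, sub_sub_cancel]
  intro r c r' c' x y hx hy hxy
  simp only [blockDiagArray] at hx hy
  split_ifs at hx hy with h h'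
  cases hx
  cases hy
  have hsame := hf hxy
  simp only [Prod.mk.injEq] at hsame
  obtain ⟨hi, ha, hb⟩ := hsame
  obtain rfl : r = r' := (blockCoord hn).injective (Prod.ext hi ha)
  obtain rfl : c = c' := (colCoord hn off).injective (Prod.ext (by rw [hcol h, hcol h']) hb)
  rfl

end BlockDiagArray

section Levels

variable {m : ℕ}

def blockIndex (m : ℕ) (p : ZMod m × Fin 2 × Fin 2) : ℕ := m * (2 * p.2.2 + p.2.1) + p.1.val

theorem blockIndex_injective [NeZero m] : Function.Injective (blockIndex m) := by
  rintro ⟨i, a, b⟩ ⟨i', a', b'⟩ h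
  simp only [blockIndex] at h
  have hm : 0 < m := Nat.pos_of_neZero m
  have hq : 2 * (b : ℕ) + a = 2 * b' + a' := by
    simpa [Nat.mul_add_div hm, Nat.div_eq_of_lt i.val_lt, Nat.div_eq_of_lt i'.val_lt]
      using congrArg (· / m) h
  rw [hq] at h
  simp only [Prod.mk.injEq, Fin.ext_iff]
  exact ⟨ZMod.val_injective m (by omega), by omega, by omega⟩

theorem range_blockIndex [NeZero m] : Set.range (blockIndex m) = Set.Iio (4 * m) := by
  have hm : 0 < m := Nat.pos_of_neZero m
  ext x
  constructor
  · rintro ⟨⟨i, a, b⟩, rfl⟩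
    have : m * (2 * b + a) ≤ m * 3 := Nat.mul_le_mul_left _ (by omega)
    simp only [blockIndex, Set.mem_Iio]
    have := i.val_lt
    omega
  · intro hx
    have hq : x / m < 4 := (Nat.div_lt_iff_lt_mul hm).2 hx
    refine ⟨((x % m : ℕ), ⟨x / m % 2, by omega⟩, ⟨x / m / 2, by omega⟩), ?_⟩
    simp only [blockIndex, ZMod.val_natCast, Nat.mod_mod]
    rw [show 2 * (x / m / 2) + x / m % 2 = x / m by omega, Nat.div_add_mod]

/-- The sign makes two consecutive levels cancel in every row and every column. -/
def levelEntry (m c : ℕ) (p : ZMod m × Fin 2 × Fin 2) : ℤ :=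
  (-1) ^ ((p.2.1 : ℕ) + p.2.2 + c) * ((c * (4 * m + 1) + blockIndex m p + 1 : ℕ) : ℤ)

theorem natAbs_levelEntry (c : ℕ) (p : ZMod m × Fin 2 × Fin 2) :
    (levelEntry m c p).natAbs = c * (4 * m + 1) + blockIndex m p + 1 := by
  rw [levelEntry, Int.natAbs_mul, Int.natAbs_pow, Int.natAbs_neg, Int.natAbs_one, one_pow, one_mul,
    Int.natAbs_natCast]

theorem sum_levelEntry_row (c : ℕ) (i : ZMod m) (a : Fin 2) :
    ∑ b, levelEntry m c (i, a, b) + ∑ b, levelEntry m (c + 1) (i, a, b) = 0 := by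
  simp only [levelEntry, blockIndex, Fin.sum_univ_two, Fin.val_zero, Fin.val_one, pow_add,
    pow_succ, pow_zero]
  push_cast
  ring

theorem sum_levelEntry_col (c : ℕ) (i i' : ZMod m) (b : Fin 2) :
    ∑ a, levelEntry m c (i, a, b) + ∑ a, levelEntry m (c + 1) (i', a, b) = 0 := by
  simp only [levelEntry, blockIndex, Fin.sum_univ_two, Fin.val_zero, Fin.val_one, pow_add,
    pow_succ, pow_zero]
  push_cast
  ring

theorem range_natAbs_levelEntry [NeZero m] (c : ℕ) :
    (Set.range fun p => (levelEntry m c p).natAbs) =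
      Set.Ioc (c * (4 * m + 1)) (c * (4 * m + 1) + 4 * m) := by
  ext x
  simp only [natAbs_levelEntry, Set.mem_range, Set.mem_Ioc]
  constructor
  · rintro ⟨p, rfl⟩
    have : blockIndex m p ∈ Set.Iio (4 * m) := by
      rw [← range_blockIndex]
      exact Set.mem_range_self p
    rw [Set.mem_Iio] at this
    omega
  · rintro ⟨h1, h2⟩
    obtain ⟨p, hp⟩ : x - c * (4 * m + 1) - 1 ∈ Set.range (blockIndex m) := by
      rw [range_blockIndex]
      exact Set.mem_Iio.2 (by omega)
    exact ⟨p, by omega⟩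

theorem injective_natAbs_levelEntry [NeZero m] (c : ℕ) :
    Function.Injective fun p => (levelEntry m c p).natAbs := fun p q h =>
  blockIndex_injective (by simpa [natAbs_levelEntry] using h)

end Levels

section TwoLevels

variable {n m : ℕ} [NeZero m] [NeZero n] (hn : n = 2 * m) (off : ℕ) (e : ZMod m)

def twoLevels (c : ℕ) : Fin n → Fin n → Option ℤ :=
  overlay (blockDiagArray hn off (e + c) (levelEntry m c))
    (blockDiagArray hn off (e + (c + 1 : ℕ)) (levelEntry m (c + 1)))

theorem skel_twoLevels (c : ℕ) :
    skel (twoLevels hn off e c) =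
      blockDiagonal hn off (e + c) ∪ blockDiagonal hn off (e + (c + 1 : ℕ)) := by
  rw [twoLevels, skel_overlay, skel_blockDiagArray, skel_blockDiagArray]

theorem isIntHeffterOn_twoLevels {c : ℕ} (hc : c + 1 < m) :
    IsIntHeffterOn 4 (Set.Ioc (c * (4 * m + 1)) (c * (4 * m + 1) + 4 * m) ∪
      Set.Ioc ((c + 1) * (4 * m + 1)) ((c + 1) * (4 * m + 1) + 4 * m))
      (twoLevels hn off e c) := by
  have hskel : Disjoint (skel (blockDiagArray hn off (e + c) (levelEntry m c)))
      (skel (blockDiagArray hn off (e + (c + 1 : ℕ)) (levelEntry m (c + 1)))) := by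
    rw [skel_blockDiagArray, skel_blockDiagArray]
    refine disjoint_blockDiagonal hn fun h => ?_
    have := natCast_zmod_inj_of_lt (by omega) hc (add_left_cancel h)
    omega
  refine ⟨fun r => ?_, fun c' => ?_, fun r => ?_, fun c' => ?_, ?_, ?_⟩
  · rw [twoLevels, rowFilled_overlay hskel, rowFilled_blockDiagArray, rowFilled_blockDiagArray]
  · rw [twoLevels, colFilled_overlay hskel, colFilled_blockDiagArray, colFilled_blockDiagArray]
  · rw [twoLevels, rowSum_overlay hskel, rowSum_blockDiagArray, rowSum_blockDiagArray,
      sum_levelEntry_row]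
  · rw [twoLevels, colSum_overlay hskel, colSum_blockDiagArray, colSum_blockDiagArray,
      sum_levelEntry_col]
  · rw [twoLevels, suppSet_overlay hskel, suppSet_blockDiagArray, suppSet_blockDiagArray,
      range_natAbs_levelEntry, range_natAbs_levelEntry]
  · refine DistinctAbs.overlay
      (distinctAbs_blockDiagArray hn off _ _ (injective_natAbs_levelEntry c))
      (distinctAbs_blockDiagArray hn off _ _ (injective_natAbs_levelEntry (c + 1))) ?_
    rw [suppSet_blockDiagArray, suppSet_blockDiagArray, range_natAbs_levelEntry,
      range_natAbs_levelEntry]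
    exact Set.Ioc_disjoint_Ioc_of_le (by nlinarith)

end TwoLevels

end Heffter

open Heffter in
/-- an integer cyclically `(2,d)`-diagonal `H_{2d}(n;2d)` with
`n ≥ 2d+4` yields an integer cyclically `(2,d+2)`-diagonal `H_{2d+4}(n;2d+4)`. -/
theorem intHeffter_ext_2d_even (n d : ℕ) (hn : 2 * d + 4 ≤ n)
    (hex : ∃ A : Fin n → Fin n → Option ℤ,
      IsIntHeffter n (2 * d) (2 * d) A ∧ CycSKDiagonal 2 d A) :
    ∃ A : Fin n → Fin n → Option ℤ,
      IsIntHeffter n (2 * d + 4) (2 * d + 4) A ∧ CycSKDiagonal 2 (d + 2) A := by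
  obtain ⟨A, hA, hdiag⟩ := hex
  have heven : n = 2 * (n / 2) := by have := hdiag.1; omega
  have : NeZero n := ⟨by omega⟩
  have : NeZero (n / 2) := ⟨by omega⟩
  obtain ⟨e, off, hskel⟩ := (cycSKDiagonal_two_iff heven).1 hdiag
  rw [isIntHeffter_iff, admissible_heffter heven rfl] at hA
  have hL := isIntHeffterOn_twoLevels heven off e (c := d) (by omega)
  refine ⟨overlay A (twoLevels heven off e d), ?_,
    (cycSKDiagonal_two_iff heven).2 ⟨e, off, ?_⟩⟩
  · rw [isIntHeffter_iff, admissible_heffter heven (c := d + 1 + 1) (by ring),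
      admissible_succ_mul, admissible_succ_mul, Set.union_assoc]
    refine hA.overlay hL ?_ ?_
    · rw [hskel, skel_twoLevels, Set.disjoint_union_right]
      exact ⟨disjoint_diagBand_blockDiagonal heven e le_rfl (by omega),
        disjoint_diagBand_blockDiagonal heven e (by omega) (by omega)⟩
    · rw [Set.disjoint_union_right]
      exact ⟨disjoint_admissible_Ioc le_rfl, disjoint_admissible_Ioc (by nlinarith)⟩
  · rw [skel_overlay, hskel, skel_twoLevels, show d + 2 = d + 1 + 1 from rfl, diagBand_succ,
      diagBand_succ, Set.union_assoc]
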